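/- arXiv:cs/0611088 — 5 statements merged into one kernel-verified Lean document; each statement's English description precedes it below -/
import Mathlib

section
/- Let (M,d) be a metric space and let x, y, z, r ∈ M be pairwise distinct points. Define the seven isolation indices a = α_{{x},{y,z,r}}, b = α_{{y},{x,z,r}}, c = α_{{z},{x,y,r}}, t = α_{{r},{x,y,z}}, e = α_{{x,y},{z,r}}, f = α_{{x,z},{y,r}}, g = α_{{x,r},{y,z}}. Then the six identities hold: d(x,y) = a+b+f+g, d(x,z) = a+c+e+g, d(y,z) = b+c+e+f, d(x,r) = a+t+e+f, d(y,r) = b+t+e+g, d(z,r) = c+t+f+g. (Every metric on four points is totally decomposable: each distance is the sum of the isolation indices of the splits separating the two points.) -/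
/-- The Bandelt–Dress isolation index of a pair of nonempty subsets `A, B`
of a metric space. -/
noncomputable def isolationIndex {M : Type*} [MetricSpace M] (A B : Set M) : ℝ :=
  (1 / 2) * sInf {v : ℝ | ∃ a ∈ A, ∃ a' ∈ A, ∃ b ∈ B, ∃ b' ∈ B,
    v = max 0 (max (dist a b + dist a' b' - dist a a' - dist b b')
                   (dist a b' + dist a' b - dist a a' - dist b b'))}

/-!
Put `β₁ = d(x,y) + d(z,r)`, `β₂ = d(x,z) + d(y,r)`, `β₃ = d(x,r) + d(y,z)` and
`m = max β₁ β₂ β₃`. All seven isolation indices have closed forms in these terms. The split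
`{x,y} | {z,r}` has index `(m - β₁) / 2`, attained by the quadruple `(x, y; z, r)`, while every
degenerate quadruple is bounded below by the triangle inequality. The split `{x} | {y,z,r}` has index
`(d(x,y) + d(x,z) + d(x,r) - m) / 2`: it is the least Gromov product at `x`, and
`d(x,y) + d(x,z) - d(y,z) = d(x,y) + d(x,z) + d(x,r) - β₃`, and similarly for the other two.
Substituting these forms, each of the six identities is linear in the six distances.
-/

section PseudoMetric

variable {M : Type*} [PseudoMetricSpace M]

def splitDefect (a a' b b' : M) : ℝ :=
  max 0 (max (dist a b + dist a' b' - dist a a' - dist b b')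
             (dist a b' + dist a' b - dist a a' - dist b b'))

theorem splitDefect_nonneg (a a' b b' : M) : 0 ≤ splitDefect a a' b b' :=
  le_max_left _ _

theorem le_splitDefect_left (a a' b b' : M) :
    dist a b + dist a' b' - dist a a' - dist b b' ≤ splitDefect a a' b b' :=
  le_max_of_le_right (le_max_left _ _)

theorem le_splitDefect_right (a a' b b' : M) :
    dist a b' + dist a' b - dist a a' - dist b b' ≤ splitDefect a a' b b' :=
  le_max_of_le_right (le_max_right _ _)

theorem splitDefect_self_left (a b b' : M) :
    splitDefect a a b b' = dist a b + dist a b' - dist b b' := by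
  have h := dist_triangle_left b b' a
  rw [splitDefect, dist_self, add_comm (dist a b'), max_self, max_eq_right (by linarith)]
  ring

def fourPointMax (x y z r : M) : ℝ :=
  max (dist x y + dist z r) (max (dist x z + dist y r) (dist x r + dist y z))

theorem fourPointMax_eq_or (x y z r : M) :
    fourPointMax x y z r = dist x y + dist z r ∨ fourPointMax x y z r = dist x z + dist y r ∨
      fourPointMax x y z r = dist x r + dist y z := by
  unfold fourPointMax
  rcases max_choice (dist x z + dist y r) (dist x r + dist y z) with h | h <;>
    rcases max_choice (dist x y + dist z r) (max (dist x z + dist y r) (dist x r + dist y z))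
      with h' | h' <;> simp_all

theorem le_fourPointMax (x y z r : M) :
    dist x y + dist z r ≤ fourPointMax x y z r ∧ dist x z + dist y r ≤ fourPointMax x y z r ∧
      dist x r + dist y z ≤ fourPointMax x y z r :=
  ⟨le_max_left _ _, le_max_of_le_right (le_max_left _ _),
    le_max_of_le_right (le_max_right _ _)⟩

theorem fourPointMax_swap_left (x y z r : M) : fourPointMax y x z r = fourPointMax x y z r := by
  rw [fourPointMax, fourPointMax, dist_comm y x, add_comm (dist y z), add_comm (dist y r),
    max_comm (dist x r + _)]

theorem fourPointMax_swap_mid (x y z r : M) : fourPointMax x z y r = fourPointMax x y z r := by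
  rw [fourPointMax, fourPointMax, dist_comm z y, max_left_comm]

theorem fourPointMax_swap_right (x y z r : M) : fourPointMax x y r z = fourPointMax x y z r := by
  rw [fourPointMax, fourPointMax, dist_comm r z, max_comm (dist x r + _)]

end PseudoMetric

section Metric

variable {M : Type*} [MetricSpace M]

theorem isolationIndex_eq_half_of_isLeast {A B : Set M} {V : ℝ}
    (hV : IsLeast {v | ∃ a ∈ A, ∃ a' ∈ A, ∃ b ∈ B, ∃ b' ∈ B, v = splitDefect a a' b b'} V) :
    isolationIndex A B = V / 2 := by
  rw [isolationIndex, ← hV.csInf_eq]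
  simp only [splitDefect]
  ring

theorem isolationIndex_singleton_triple (x y z r : M) :
    isolationIndex {x} {y, z, r} = (dist x y + dist x z + dist x r - fourPointMax x y z r) / 2 := by
  refine isolationIndex_eq_half_of_isLeast ⟨?_, ?_⟩
  · rcases fourPointMax_eq_or x y z r with h | h | h
    · exact ⟨x, rfl, x, rfl, z, by simp, r, by simp, by rw [splitDefect_self_left, h]; ring⟩
    · exact ⟨x, rfl, x, rfl, y, by simp, r, by simp, by rw [splitDefect_self_left, h]; ring⟩
    · exact ⟨x, rfl, x, rfl, y, by simp, z, by simp, by rw [splitDefect_self_left, h]; ring⟩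
  · rintro _ ⟨a, ha, a', ha', b, hb, b', hb', rfl⟩
    simp only [Set.mem_insert_iff, Set.mem_singleton_iff] at ha ha' hb hb'
    subst a a'
    rw [splitDefect_self_left]
    obtain ⟨h₁, h₂, h₃⟩ := le_fourPointMax x y z r
    rcases hb with hb | hb | hb <;> rcases hb' with hb' | hb' | hb' <;> subst b b' <;>
      linarith [dist_triangle x y z, dist_triangle x y r, dist_triangle x z r,
        dist_triangle x z y, dist_triangle x r y, dist_triangle x r z,
        dist_comm y z, dist_comm y r, dist_comm z r, dist_self y, dist_self z, dist_self r]

theorem isolationIndex_pair_pair (x y z r : M) :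
    isolationIndex {x, y} {z, r} = (fourPointMax x y z r - (dist x y + dist z r)) / 2 := by
  have hV : fourPointMax x y z r - (dist x y + dist z r) = splitDefect x y z r := by
    -- write `0` as `β₁ - β₁` and pull `- β₁` out of both maxima
    rw [splitDefect, fourPointMax, ← sub_self (dist x y + dist z r), ← max_sub_sub_right,
      ← max_sub_sub_right]
    ring_nf
  refine isolationIndex_eq_half_of_isLeast
    ⟨⟨x, by simp, y, by simp, z, by simp, r, by simp, hV⟩, ?_⟩
  rintro _ ⟨a, ha, a', ha', b, hb, b', hb', rfl⟩
  simp only [Set.mem_insert_iff, Set.mem_singleton_iff] at ha ha' hb hb'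
  rw [hV]
  have h₁ := le_splitDefect_left a a' b b'
  have h₂ := le_splitDefect_right a a' b b'
  refine max_le (splitDefect_nonneg _ _ _ _) (max_le ?_ ?_) <;>
    rcases ha with ha | ha <;> rcases ha' with ha' | ha' <;> rcases hb with hb | hb <;>
    rcases hb' with hb' | hb' <;> subst a a' b b' <;>
    linarith [dist_triangle x y z, dist_triangle x y r, dist_triangle x z y, dist_triangle x z r,
      dist_triangle x r y, dist_triangle x r z, dist_triangle y x z, dist_triangle y x r,
      dist_triangle y z r, dist_triangle y r z, dist_triangle z x r, dist_triangle z y r,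
      dist_comm x y, dist_comm x z, dist_comm x r, dist_comm y z, dist_comm y r, dist_comm z r,
      dist_self x, dist_self y, dist_self z, dist_self r]

end Metric

theorem four_point_totally_decomposable_general {M : Type*} [MetricSpace M]
    (x y z r : M) :
    dist x y = isolationIndex ({x} : Set M) {y, z, r}
             + isolationIndex ({y} : Set M) {x, z, r}
             + isolationIndex ({x, z} : Set M) {y, r}
             + isolationIndex ({x, r} : Set M) {y, z} ∧
    dist x z = isolationIndex ({x} : Set M) {y, z, r}
             + isolationIndex ({z} : Set M) {x, y, r}
             + isolationIndex ({x, y} : Set M) {z, r}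
             + isolationIndex ({x, r} : Set M) {y, z} ∧
    dist y z = isolationIndex ({y} : Set M) {x, z, r}
             + isolationIndex ({z} : Set M) {x, y, r}
             + isolationIndex ({x, y} : Set M) {z, r}
             + isolationIndex ({x, z} : Set M) {y, r} ∧
    dist x r = isolationIndex ({x} : Set M) {y, z, r}
             + isolationIndex ({r} : Set M) {x, y, z}
             + isolationIndex ({x, y} : Set M) {z, r}
             + isolationIndex ({x, z} : Set M) {y, r} ∧
    dist y r = isolationIndex ({y} : Set M) {x, z, r}
             + isolationIndex ({r} : Set M) {x, y, z}
             + isolationIndex ({x, y} : Set M) {z, r}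
             + isolationIndex ({x, r} : Set M) {y, z} ∧
    dist z r = isolationIndex ({z} : Set M) {x, y, r}
             + isolationIndex ({r} : Set M) {x, y, z}
             + isolationIndex ({x, z} : Set M) {y, r}
             + isolationIndex ({x, r} : Set M) {y, z} := by
  have ha := isolationIndex_singleton_triple x y z r
  have hb := isolationIndex_singleton_triple y x z r
  have hc := isolationIndex_singleton_triple z x y r
  have ht := isolationIndex_singleton_triple r x y z
  have he := isolationIndex_pair_pair x y z r
  have hf := isolationIndex_pair_pair x z y r
  have hg := isolationIndex_pair_pair x r y z
  rw [fourPointMax_swap_left] at hb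
  rw [fourPointMax_swap_left, fourPointMax_swap_mid] at hc
  rw [fourPointMax_swap_left, fourPointMax_swap_mid, fourPointMax_swap_right] at ht
  rw [fourPointMax_swap_mid] at hf
  rw [fourPointMax_swap_mid, fourPointMax_swap_right] at hg
  refine ⟨?_, ?_, ?_, ?_, ?_, ?_⟩ <;>
    linarith [dist_comm x y, dist_comm x z, dist_comm x r, dist_comm y z, dist_comm y r,
      dist_comm z r]

/-- Every metric on four points is totally decomposable: for pairwise distinct
points `x, y, z, r`, each distance is the sum of the isolation indices of the
splits separating the two points. -/
theorem four_point_totally_decomposable {M : Type*} [MetricSpace M]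
    (x y z r : M) (hxy : x ≠ y) (hxz : x ≠ z) (hxr : x ≠ r)
    (hyz : y ≠ z) (hyr : y ≠ r) (hzr : z ≠ r) :
    dist x y = isolationIndex ({x} : Set M) {y, z, r}
             + isolationIndex ({y} : Set M) {x, z, r}
             + isolationIndex ({x, z} : Set M) {y, r}
             + isolationIndex ({x, r} : Set M) {y, z} ∧
    dist x z = isolationIndex ({x} : Set M) {y, z, r}
             + isolationIndex ({z} : Set M) {x, y, r}
             + isolationIndex ({x, y} : Set M) {z, r}
             + isolationIndex ({x, r} : Set M) {y, z} ∧
    dist y z = isolationIndex ({y} : Set M) {x, z, r}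
             + isolationIndex ({z} : Set M) {x, y, r}
             + isolationIndex ({x, y} : Set M) {z, r}
             + isolationIndex ({x, z} : Set M) {y, r} ∧
    dist x r = isolationIndex ({x} : Set M) {y, z, r}
             + isolationIndex ({r} : Set M) {x, y, z}
             + isolationIndex ({x, y} : Set M) {z, r}
             + isolationIndex ({x, z} : Set M) {y, r} ∧
    dist y r = isolationIndex ({y} : Set M) {x, z, r}
             + isolationIndex ({r} : Set M) {x, y, z}
             + isolationIndex ({x, y} : Set M) {z, r}
             + isolationIndex ({x, r} : Set M) {y, z} ∧
    dist z r = isolationIndex ({z} : Set M) {x, y, r}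
             + isolationIndex ({r} : Set M) {x, y, z}
             + isolationIndex ({x, z} : Set M) {y, r}
             + isolationIndex ({x, r} : Set M) {y, z} :=
  four_point_totally_decomposable_general x y z r
end

section
/- Let (M,d) be a metric space and let x, y, z, r ∈ M be pairwise distinct points. Then at least one of the three isolation indices α_{{x,y},{z,r}}, α_{{x,z},{y,r}}, α_{{x,r},{y,z}} is equal to zero; equivalently, their product is zero. -/
theorem isolationIndex_eq_zero_of_cross_le {M : Type*} [MetricSpace M] {A B : Set M}
    {a a' b b' : M} (ha : a ∈ A) (ha' : a' ∈ A) (hb : b ∈ B) (hb' : b' ∈ B)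
    (h₁ : dist a b + dist a' b' ≤ dist a a' + dist b b')
    (h₂ : dist a b' + dist a' b ≤ dist a a' + dist b b') :
    isolationIndex A B = 0 := by
  set S := {v : ℝ | ∃ a ∈ A, ∃ a' ∈ A, ∃ b ∈ B, ∃ b' ∈ B,
    v = max 0 (max (dist a b + dist a' b' - dist a a' - dist b b')
                   (dist a b' + dist a' b - dist a a' - dist b b'))}
  have hS_nonneg : ∀ v ∈ S, 0 ≤ v := by
    rintro v ⟨-, -, -, -, -, -, -, -, rfl⟩
    exact le_max_left _ _
  have hzero_mem : (0 : ℝ) ∈ S :=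
    ⟨a, ha, a', ha', b, hb, b', hb', (max_eq_left (max_le (by linarith) (by linarith))).symm⟩
  have hInf : sInf S = 0 :=
    le_antisymm (csInf_le ⟨0, hS_nonneg⟩ hzero_mem) (le_csInf ⟨0, hzero_mem⟩ hS_nonneg)
  change (1 / 2) * sInf S = 0
  rw [hInf, mul_zero]

theorem isolationIndex_pair_eq_zero {M : Type*} [MetricSpace M] {p q u v : M}
    (h₁ : dist p u + dist q v ≤ dist p q + dist u v)
    (h₂ : dist p v + dist q u ≤ dist p q + dist u v) :
    isolationIndex ({p, q} : Set M) {u, v} = 0 :=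
  isolationIndex_eq_zero_of_cross_le (by simp) (by simp) (by simp) (by simp) h₁ h₂

theorem isolationIndex_pair_splits_not_all_pos_general {M : Type*} [MetricSpace M]
    (x y z r : M) :
    isolationIndex ({x, y} : Set M) {z, r} = 0 ∨
    isolationIndex ({x, z} : Set M) {y, r} = 0 ∨
    isolationIndex ({x, r} : Set M) {y, z} = 0 := by
  have := dist_comm y z
  have := dist_comm y r
  have := dist_comm z r
  rcases le_total (dist x z + dist y r) (dist x y + dist z r) with h₂₁ | h₁₂
  · rcases le_total (dist x r + dist y z) (dist x y + dist z r) with h₃₁ | h₁₃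
    · exact Or.inl (isolationIndex_pair_eq_zero (by linarith) (by linarith))
    · exact Or.inr (Or.inr (isolationIndex_pair_eq_zero (by linarith) (by linarith)))
  · rcases le_total (dist x r + dist y z) (dist x z + dist y r) with h₃₂ | h₂₃
    · exact Or.inr (Or.inl (isolationIndex_pair_eq_zero (by linarith) (by linarith)))
    · exact Or.inr (Or.inr (isolationIndex_pair_eq_zero (by linarith) (by linarith)))

/-- For four pairwise distinct points `x, y, z, r` of a metric space, at least
one of the isolation indices of the three pair-pair splits is zero. -/
theorem isolationIndex_pair_splits_not_all_pos {M : Type*} [MetricSpace M]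
    (x y z r : M) (hxy : x ≠ y) (hxz : x ≠ z) (hxr : x ≠ r)
    (hyz : y ≠ z) (hyr : y ≠ r) (hzr : z ≠ r) :
    isolationIndex ({x, y} : Set M) {z, r} = 0 ∨
    isolationIndex ({x, z} : Set M) {y, r} = 0 ∨
    isolationIndex ({x, r} : Set M) {y, z} = 0 :=
  isolationIndex_pair_splits_not_all_pos_general x y z r
end

section
/- Let (X,d) be a metric space, let f ∈ P(X) be minimal with respect to the pointwise partial order (i.e., f ∈ T(X)), and let x ∈ X. Then sup_{z ∈ X} |f(z) − d(x,z)| = f(x); that is, in the tight span with the sup-norm metric, the distance from the canonically embedded point h_x (where h_x(z) = d(x,z)) to f equals f(x). -/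
/-- `P(X)`: the set of functions `f : X → ℝ` with `f x + f y ≥ d(x,y)` for all `x, y`. -/
def Pspace (X : Type*) [MetricSpace X] : Set (X → ℝ) :=
  {f | ∀ x y : X, f x + f y ≥ dist x y}

/-- The tight span `T(X)`: the members of `P(X)` that are minimal with respect to
the pointwise partial order. -/
def tightSpan (X : Type*) [MetricSpace X] : Set (X → ℝ) :=
  {f | f ∈ Pspace X ∧ ∀ g ∈ Pspace X, (∀ x, g x ≤ f x) → g = f}

/-!
A minimal `f ∈ P(X)` satisfies `f z ≤ f x + d(x,z)`: otherwise truncating `f` by the cone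
`f x + d(x,·)` would give a smaller member of `P(X)`. Together with `d(x,z) ≤ f x + f z` this
bounds `|f z - d(x,z)|` by `f x`, and the bound is attained at `z = x`.
-/

namespace Pspace

variable {X : Type*} [MetricSpace X] {f : X → ℝ}

theorem nonneg (hf : f ∈ Pspace X) (x : X) : 0 ≤ f x := by
  have := hf x x
  rw [dist_self] at this
  linarith

theorem min_add_dist_mem (hf : f ∈ Pspace X) (x : X) :
    (fun y => min (f y) (f x + dist x y)) ∈ Pspace X := by
  intro a b
  dsimp only
  have hab := hf a b
  have hax := hf a x
  have hxb := hf x b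
  have hfx := Pspace.nonneg hf x
  have htri := dist_triangle a x b
  rw [dist_comm a x] at hax htri
  rcases min_cases (f a) (f x + dist x a) with ⟨ha, -⟩ | ⟨ha, -⟩ <;>
    rcases min_cases (f b) (f x + dist x b) with ⟨hb, -⟩ | ⟨hb, -⟩ <;>
    · rw [ha, hb]; linarith

end Pspace

namespace tightSpan

variable {X : Type*} [MetricSpace X] {f : X → ℝ}

theorem le_add_dist (hf : f ∈ tightSpan X) (x z : X) : f z ≤ f x + dist x z := by
  have htrunc := hf.2 _ (Pspace.min_add_dist_mem hf.1 x) fun y => min_le_left _ _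
  rw [← congrFun htrunc z]
  exact min_le_right _ _

theorem abs_sub_dist_le (hf : f ∈ tightSpan X) (x z : X) : |f z - dist x z| ≤ f x := by
  have hsum := hf.1 x z
  have hlip := le_add_dist hf x z
  rw [abs_sub_le_iff]
  constructor <;> linarith

end tightSpan

/-- For `f` in the tight span and `x ∈ X`, the sup-norm distance from the
canonically embedded point `h_x = d(x,·)` to `f` equals `f(x)`:
`sup_{z ∈ X} |f(z) − d(x,z)| = f(x)`. -/
theorem tightSpan_dist_to_embedded_point {X : Type*} [MetricSpace X] {f : X → ℝ}
    (hf : f ∈ tightSpan X) (x : X) :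
    (⨆ z : X, |f z - dist x z|) = f x := by
  have hmax : IsGreatest (Set.range fun z => |f z - dist x z|) (f x) := by
    refine ⟨⟨x, ?_⟩, Set.forall_mem_range.mpr (tightSpan.abs_sub_dist_le hf x)⟩
    simp only [dist_self, sub_zero, abs_of_nonneg (Pspace.nonneg hf.1 x)]
  exact hmax.csSup_eq
end

section
/- The space ℝ^n with the sup-norm (L∞) metric is an injective metric space: for every metric space Y and every isometric embedding ι : (Fin n → ℝ, sup metric) → Y, there exists a 1-Lipschitz map ρ : Y → (Fin n → ℝ) such that ρ(ι(p)) = p for every p; here the sup metric is d(p,q) = max_{1≤i≤n} |p_i − q_i|. -/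
/-! The inverse of `ι` is 1-Lipschitz on the range of `ι`, and 1-Lipschitz maps into `ℝ^n` with
the sup metric extend from any subset to the whole space: coordinatewise this is McShane's
extension `y ↦ inf_p (p_i + d(y, ι p))`, and the sup metric makes the coordinate bounds combine
with no loss of constant. -/

open Function Set

namespace AntilipschitzWith

variable {α β : Type*} {K : NNReal}

theorem lipschitzOnWith_invFun_range [EMetricSpace α] [PseudoEMetricSpace β] [Nonempty α]
    {f : α → β} (hf : AntilipschitzWith K f) : LipschitzOnWith K (invFun f) (range f) := by
  rintro _ ⟨x, rfl⟩ _ ⟨y, rfl⟩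
  rw [leftInverse_invFun hf.injective x, leftInverse_invFun hf.injective y]
  exact hf x y

theorem exists_lipschitzWith_leftInverse_pi {ι : Type*} [Fintype ι] [PseudoMetricSpace β]
    {e : (ι → ℝ) → β} (he : AntilipschitzWith K e) :
    ∃ ρ : β → ι → ℝ, LipschitzWith K ρ ∧ LeftInverse ρ e := by
  obtain ⟨ρ, hρ, hρ_eq⟩ := he.lipschitzOnWith_invFun_range.extend_pi
  exact ⟨ρ, hρ, fun p => (hρ_eq (mem_range_self p)).symm.trans (leftInverse_invFun he.injective p)⟩

end AntilipschitzWith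

/-- `ℝ^n` with the sup-norm (`L∞`) metric — i.e. `Fin n → ℝ` with the product
metric `d(p,q) = max_i |p_i − q_i|` — is an injective metric space: for every
metric space `Y` and every isometric embedding `ι : (Fin n → ℝ) → Y` there is a
nonexpansive retraction `ρ : Y → (Fin n → ℝ)` with `ρ ∘ ι = id`. -/
theorem linf_injective (n : ℕ) (Y : Type*) [MetricSpace Y]
    (ι : (Fin n → ℝ) → Y) (hι : Isometry ι) :
    ∃ ρ : Y → (Fin n → ℝ), LipschitzWith 1 ρ ∧ ∀ p, ρ (ι p) = p :=
  hι.antilipschitz.exists_lipschitzWith_leftInverse_pi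
end

section
/- No Euclidean space of dimension more than one is injective: for every n ≥ 2 there exist a metric space Y and an isometric embedding ι : E → Y, where E is ℝ^n with the Euclidean (L2) metric, such that no 1-Lipschitz map ρ : Y → E satisfies ρ(ι(p)) = p for every p ∈ E. -/
/-!
An injective metric space is hyperconvex: if a set `S` has all mutual distances at most `2r`,
then adjoining one new point at distance `r + infDist p S` from each `p` is again a metric space,
and a 1-Lipschitz retraction sends the new point to a centre of a closed `r`-ball containing `S`.
In the Euclidean plane the points `u`, `-u`, `(3/2) v` (with `u, v` orthonormal) are mutually at
distance at most `2`, but by strict convexity the only point within `1` of both `u` and `-u` is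
`0`, which is at distance `3/2` from `(3/2) v`.
-/

open Metric

/-- The metric on `Option E` extending that of `E` by a point `none` at distance `f p` from
each `p`; the hypotheses on `f` are the triangle inequalities through `none`. -/
@[reducible] noncomputable def optionMetricSpace {E : Type*} [MetricSpace E] (f : E → ℝ)
    (hpos : ∀ p, 0 < f p) (hlip : ∀ p q, f p ≤ f q + dist p q)
    (hsum : ∀ p q, dist p q ≤ f p + f q) :
    MetricSpace (Option E) where
  dist
    | none, none => 0
    | none, some p | some p, none => f p
    | some p, some q => dist p q
  dist_self := by rintro (_ | p) <;> simp
  dist_comm := by rintro (_ | p) (_ | q) <;> simp [dist_comm]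
  dist_triangle := by
    rintro (_ | p) (_ | q) (_ | r)
    · simp
    · simp
    · exact (add_pos (hpos q) (hpos q)).le
    · linarith [hlip r q, dist_comm r q]
    · simp
    · exact hsum p r
    · linarith [hlip p q]
    · exact dist_triangle p q r
  eq_of_dist_eq_zero := by
    rintro (_ | p) (_ | q) h
    · rfl
    · exact absurd h (hpos q).ne'
    · exact absurd h (hpos p).ne'
    · exact congrArg some (eq_of_dist_eq_zero h)

theorem Metric.dist_le_infDist_add_infDist_add {E : Type*} [PseudoMetricSpace E] {S : Set E}
    {r : ℝ} (hS : S.Nonempty) (hdiam : ∀ s ∈ S, ∀ t ∈ S, dist s t ≤ 2 * r) (p q : E) :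
    dist p q ≤ infDist p S + infDist q S + 2 * r := by
  have hp : dist p q - infDist q S - 2 * r ≤ infDist p S := by
    refine (le_infDist hS).2 fun s hs => ?_
    have hq : dist p q - dist p s - 2 * r ≤ infDist q S := by
      refine (le_infDist hS).2 fun t ht => ?_
      linarith [dist_triangle4 p s t q, hdiam s hs t ht, dist_comm q t]
    linarith
  linarith

theorem exists_isometry_not_exists_lipschitz_retraction {E : Type} [MetricSpace E] {S : Set E}
    {r : ℝ} (hr : 0 < r) (hdiam : ∀ s ∈ S, ∀ t ∈ S, dist s t ≤ 2 * r)
    (hcenter : ∀ z, ¬S ⊆ closedBall z r) :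
    ∃ (Y : Type) (m : MetricSpace Y) (ι : E → Y),
      letI := m
      Isometry ι ∧ ¬∃ ρ : Y → E, LipschitzWith 1 ρ ∧ ∀ p, ρ (ι p) = p := by
  let f : E → ℝ := fun p => r + infDist p S
  have hpos : ∀ p, 0 < f p := fun p => add_pos_of_pos_of_nonneg hr infDist_nonneg
  have hlip : ∀ p q, f p ≤ f q + dist p q := fun p q => by
    linarith [infDist_le_infDist_add_dist (x := p) (y := q) (s := S)]
  have hsum : ∀ p q, dist p q ≤ f p + f q := fun p q => by
    have hS : S.Nonempty := Set.nonempty_iff_ne_empty.2 fun h => hcenter p (by simp [h])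
    linarith [dist_le_infDist_add_infDist_add hS hdiam p q]
  let _ := optionMetricSpace f hpos hlip hsum
  refine ⟨Option E, inferInstance, some, Isometry.of_dist_eq fun _ _ => rfl, ?_⟩
  rintro ⟨ρ, hρ, hretract⟩
  refine hcenter (ρ none) fun s hs => ?_
  calc dist s (ρ none) = dist (ρ (some s)) (ρ none) := by rw [hretract]
    _ ≤ dist (some s) none := by simpa using hρ.dist_le_mul (some s) none
    _ = r := show f s = r by simp [f, infDist_zero_of_mem hs]

theorem not_subset_closedBall_of_lt_dist_midpoint {V P : Type*} [NormedAddCommGroup V]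
    [NormedSpace ℝ V] [StrictConvexSpace ℝ V] [MetricSpace P] [NormedAddTorsor V P]
    {a b c : P} {r : ℝ} (hab : dist a b = 2 * r) (hc : r < dist c (midpoint ℝ a b)) (z : P) :
    ¬{a, b, c} ⊆ closedBall z r := by
  intro h
  have ha : dist a z ≤ r := h (by simp)
  have hb : dist b z ≤ r := h (by simp)
  have hz : dist c z ≤ r := h (by simp)
  have htri : dist a b ≤ dist a z + dist z b := dist_triangle a z b
  rw [dist_comm b z] at hb
  have hmid : z = midpoint ℝ a b := by apply eq_midpoint_of_dist_eq_half <;> linarith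
  exact (hmid ▸ hz).not_gt hc

theorem exists_not_subset_closedBall_of_orthonormal {V : Type*} [NormedAddCommGroup V]
    [InnerProductSpace ℝ V] {u v : V} (hu : ‖u‖ = 1) (hv : ‖v‖ = 1) (huv : inner ℝ u v = 0) :
    ∃ S : Set V, (∀ s ∈ S, ∀ t ∈ S, dist s t ≤ 2) ∧ ∀ z, ¬S ⊆ closedBall z 1 := by
  set w : V := (3 / 2 : ℝ) • v
  have hw : ‖w‖ = 3 / 2 := by simp [w, norm_smul, hv]
  have huw : inner ℝ u w = 0 := by simp [w, inner_smul_right, huv]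
  have h₁₂ : dist u (-u) = 2 := by simp [dist_eq_norm, hu, ← two_smul ℝ, norm_smul]
  have h₁₃ : dist u w ≤ 2 := by
    rw [dist_eq_norm]
    nlinarith [norm_sub_sq_eq_norm_sq_add_norm_sq_real huw, norm_nonneg (u - w)]
  have h₂₃ : dist (-u) w ≤ 2 := by
    rw [dist_eq_norm, ← neg_add', norm_neg]
    nlinarith [norm_add_sq_eq_norm_sq_add_norm_sq_real huw, norm_nonneg (u + w)]
  refine ⟨{u, -u, w}, ?_, not_subset_closedBall_of_lt_dist_midpoint (by rw [h₁₂]; norm_num) ?_⟩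
  · simp only [Set.mem_insert_iff, Set.mem_singleton_iff]
    rintro s (rfl | rfl | rfl) t (rfl | rfl | rfl) <;>
      first | simp | linarith | (rw [dist_comm]; linarith)
  · rw [midpoint_self_neg, dist_zero_right, hw]; norm_num

/-- No Euclidean space of dimension at least two is injective: for every
`n ≥ 2` there exist a metric space `Y` and an isometric embedding
`ι : ℝ^n_{L2} → Y` that admits no nonexpansive retraction, i.e. no 1-Lipschitz
map `ρ : Y → ℝ^n_{L2}` with `ρ (ι p) = p` for all `p`. -/
theorem euclidean_not_injective (n : ℕ) (hn : 2 ≤ n) :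
    ∃ (Y : Type) (m : MetricSpace Y) (ι : EuclideanSpace ℝ (Fin n) → Y),
      letI := m
      Isometry ι ∧
        ¬∃ ρ : Y → EuclideanSpace ℝ (Fin n),
            LipschitzWith 1 ρ ∧ ∀ p, ρ (ι p) = p := by
  have horth := EuclideanSpace.orthonormal_single (𝕜 := ℝ) (ι := Fin n)
  obtain ⟨S, hdiam, hcenter⟩ := exists_not_subset_closedBall_of_orthonormal
    (horth.1 ⟨0, by omega⟩) (horth.1 ⟨1, by omega⟩) (horth.2 (by simp))
  exact exists_isometry_not_exists_lipschitz_retraction one_pos (by simpa using hdiam) hcenter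
end
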